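/- Let L be a Lie superalgebra over k, z ∈ Z(L) of degree 0, and α, β ∈ k with β ≠ 0. Then φ(x⊗y) = α[x,y]⊗z + β(−1)^{|x||y|} y⊗x satisfies the braid equation and has inverse φ⁻¹(x⊗y) = (α/β²) z⊗[x,y] + (1/β)(−1)^{|x||y|} y⊗x. -/

import Mathlib

/-!
Since `z` is central of degree `0`, `φ` and `ψ` act on a tensor with a factor `z` as `β`,
resp. `1 / β`, times the plain flip. On a homogeneous triple `x ⊗ y ⊗ t` both sides of the
braid equation then expand into five terms; four pairs agree because the Koszul sign
`(-1) ^ (|x| |y|)` is multiplicative in each degree, and the two `… ⊗ z ⊗ z` terms agree by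
the super Jacobi identity in Leibniz form
`[x, [y, t]] = [[x, y], t] + (-1) ^ (|x| |y|) [y, [x, t]]`. The inverse is checked the same
way on homogeneous pairs.
-/

open TensorProduct LinearMap

noncomputable section

variable {k : Type*} [Field k]

/-- `R ⊗ I` acting on the first two factors of `V ⊗ (V ⊗ V)`. -/
def leg12 {V : Type*} [AddCommGroup V] [Module k V]
    (R : V ⊗[k] V →ₗ[k] V ⊗[k] V) :
    V ⊗[k] (V ⊗[k] V) →ₗ[k] V ⊗[k] (V ⊗[k] V) :=
  (TensorProduct.assoc k V V V).toLinearMap ∘ₗ R.rTensor V ∘ₗ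
    (TensorProduct.assoc k V V V).symm.toLinearMap

/-- `I ⊗ R` acting on the last two factors. -/
def leg23 {V : Type*} [AddCommGroup V] [Module k V]
    (R : V ⊗[k] V →ₗ[k] V ⊗[k] V) :
    V ⊗[k] (V ⊗[k] V) →ₗ[k] V ⊗[k] (V ⊗[k] V) :=
  R.lTensor V

/-- `R¹³ = (I⊗τ)(R⊗I)(I⊗τ)`. -/
def leg13 {V : Type*} [AddCommGroup V] [Module k V]
    (R : V ⊗[k] V →ₗ[k] V ⊗[k] V) :
    V ⊗[k] (V ⊗[k] V) →ₗ[k] V ⊗[k] (V ⊗[k] V) :=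
  ((TensorProduct.comm k V V).toLinearMap.lTensor V) ∘ₗ leg12 R ∘ₗ
    ((TensorProduct.comm k V V).toLinearMap.lTensor V)

section KoszulSign

variable {R : Type*} [Ring R]

theorem neg_one_pow_mul_self (n : ℕ) : (-1 : R) ^ n * (-1) ^ n = 1 := by
  rw [← pow_add]
  exact Even.neg_one_pow ⟨n, rfl⟩

theorem neg_one_pow_congr_mod_two {m n : ℕ} (h : m % 2 = n % 2) : (-1 : R) ^ m = (-1) ^ n := by
  rw [neg_one_pow_eq_pow_mod_two, h, ← neg_one_pow_eq_pow_mod_two]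

theorem neg_one_pow_val_add_mul (a b c : ZMod 2) :
    (-1 : R) ^ ((a + b).val * c.val) = (-1) ^ (a.val * c.val) * (-1) ^ (b.val * c.val) := by
  rw [← pow_add]
  exact neg_one_pow_congr_mod_two (by rw [ZMod.val_add, Nat.mod_mul_mod, add_mul])

theorem neg_one_pow_val_mul_add (a b c : ZMod 2) :
    (-1 : R) ^ (a.val * (b + c).val) = (-1) ^ (a.val * b.val) * (-1) ^ (a.val * c.val) := by
  rw [← pow_add]
  exact neg_one_pow_congr_mod_two (by rw [ZMod.val_add, Nat.mul_mod_mod, mul_add])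

end KoszulSign

section GradedExt

variable {R L M ι : Type*} [CommRing R] [AddCommGroup L] [Module R L] [AddCommGroup M]
  [Module R M] {G : ι → Submodule R L}

theorem LinearMap.ext_of_iSup_eq_top (hG : ⨆ i, G i = ⊤) {f g : L →ₗ[R] M}
    (h : ∀ i, ∀ x ∈ G i, f x = g x) : f = g :=
  ext_on (s := ⋃ i, (G i : Set L)) (by rw [← Submodule.iSup_eq_span, hG])
    fun _ hx ↦ by obtain ⟨i, hi⟩ := Set.mem_iUnion.mp hx; exact h i _ hi

theorem TensorProduct.ext_of_iSup_eq_top (hG : ⨆ i, G i = ⊤) {f g : L ⊗[R] L →ₗ[R] M}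
    (h : ∀ i j, ∀ x ∈ G i, ∀ y ∈ G j, f (x ⊗ₜ y) = g (x ⊗ₜ y)) : f = g :=
  TensorProduct.ext <| LinearMap.ext_of_iSup_eq_top hG fun i x hx ↦
    LinearMap.ext_of_iSup_eq_top hG fun j y hy ↦ h i j x hx y hy

theorem TensorProduct.ext_threefold_of_iSup_eq_top (hG : ⨆ i, G i = ⊤)
    {f g : L ⊗[R] (L ⊗[R] L) →ₗ[R] M}
    (h : ∀ i j l, ∀ x ∈ G i, ∀ y ∈ G j, ∀ t ∈ G l,
      f (x ⊗ₜ (y ⊗ₜ t)) = g (x ⊗ₜ (y ⊗ₜ t))) : f = g :=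
  TensorProduct.ext <| LinearMap.ext_of_iSup_eq_top hG fun i x hx ↦
    TensorProduct.ext_of_iSup_eq_top hG fun j l y hy t ht ↦ h i j l x hx y hy t ht

end GradedExt

section Legs

variable {V : Type*} [AddCommGroup V] [Module k V] (R : V ⊗[k] V →ₗ[k] V ⊗[k] V)

theorem leg12_tmul (x y t : V) :
    leg12 R (x ⊗ₜ (y ⊗ₜ t)) = TensorProduct.assoc k V V V (R (x ⊗ₜ y) ⊗ₜ t) := by
  simp [leg12]

theorem leg23_tmul (x : V) (w : V ⊗[k] V) : leg23 R (x ⊗ₜ w) = x ⊗ₜ R w := rfl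

end Legs

def SuperAntisymm {L : Type*} [AddCommGroup L] [Module k L] (G : ZMod 2 → Submodule k L)
    (br : L →ₗ[k] L →ₗ[k] L) : Prop :=
  ∀ i j : ZMod 2, ∀ x ∈ G i, ∀ y ∈ G j,
    br x y = -(((-1 : k) ^ (i.val * j.val)) • br y x)

def SuperJacobi {L : Type*} [AddCommGroup L] [Module k L] (G : ZMod 2 → Submodule k L)
    (br : L →ₗ[k] L →ₗ[k] L) : Prop :=
  ∀ i j l : ZMod 2, ∀ x ∈ G i, ∀ y ∈ G j, ∀ t ∈ G l,
    ((-1 : k) ^ (l.val * i.val)) • br x (br y t) +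
      ((-1 : k) ^ (i.val * j.val)) • br y (br t x) +
      ((-1 : k) ^ (j.val * l.val)) • br t (br x y) = 0

section LieSuperalgebra

variable {L : Type*} [AddCommGroup L] [Module k L] {G : ZMod 2 → Submodule k L}
  {br : L →ₗ[k] L →ₗ[k] L} {z : L}

theorem bracket_central_right (hG : ⨆ i, G i = ⊤) (hanti : SuperAntisymm G br)
    (hz0 : z ∈ G 0) (hzc : ∀ x : L, br z x = 0) (x : L) : br x z = 0 := by
  have : br.flip z = 0 := LinearMap.ext_of_iSup_eq_top hG fun i x hx ↦ by
    simp [hanti i 0 x hx z hz0, hzc]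
  exact congr($this x)

theorem bracket_bracket_eq_add
    (hgrade : ∀ i j : ZMod 2, ∀ x ∈ G i, ∀ y ∈ G j, br x y ∈ G (i + j))
    (hanti : SuperAntisymm G br) (hjacobi : SuperJacobi G br)
    {i j l : ZMod 2} {x y t : L} (hx : x ∈ G i) (hy : y ∈ G j) (ht : t ∈ G l) :
    br x (br y t) = br (br x y) t + ((-1 : k) ^ (i.val * j.val)) • br y (br x t) := by
  have hj := hjacobi i j l x hx y hy t ht
  rw [hanti l i t ht x hx, hanti l (i + j) t ht _ (hgrade i j x hx y hy),
    neg_one_pow_val_mul_add, Nat.mul_comm l.val j.val] at hj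
  simp only [map_neg, map_smul, smul_neg, smul_smul] at hj
  linear_combination (norm := skip) ((-1 : k) ^ (l.val * i.val)) • hj
  match_scalars
  · linear_combination -neg_one_pow_mul_self (R := k) (l.val * i.val)
  · linear_combination
      ((-1 : k) ^ (j.val * l.val)) ^ 2 * neg_one_pow_mul_self (R := k) (l.val * i.val) +
        neg_one_pow_mul_self (R := k) (j.val * l.val)
  · linear_combination
      ((-1 : k) ^ (i.val * j.val)) * neg_one_pow_mul_self (R := k) (l.val * i.val)

variable {a b : k} {Φ : L ⊗[k] L →ₗ[k] L ⊗[k] L}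

theorem map_central_tmul (hG : ⨆ i, G i = ⊤) (hz0 : z ∈ G 0) (hzc : ∀ x : L, br z x = 0)
    (hΦ : ∀ i j : ZMod 2, ∀ x ∈ G i, ∀ y ∈ G j,
      Φ (x ⊗ₜ[k] y) = a • (br x y ⊗ₜ[k] z) +
        (b * (-1 : k) ^ (i.val * j.val)) • (y ⊗ₜ[k] x))
    (w : L) : Φ (z ⊗ₜ w) = b • (w ⊗ₜ z) := by
  have : Φ ∘ₗ TensorProduct.mk k L L z = b • (TensorProduct.mk k L L).flip z :=
    LinearMap.ext_of_iSup_eq_top hG fun j y hy ↦ by simp [hΦ 0 j z hz0 y hy, hzc]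
  exact congr($this w)

theorem map_tmul_central (hG : ⨆ i, G i = ⊤) (hanti : SuperAntisymm G br)
    (hz0 : z ∈ G 0) (hzc : ∀ x : L, br z x = 0)
    (hΦ : ∀ i j : ZMod 2, ∀ x ∈ G i, ∀ y ∈ G j,
      Φ (x ⊗ₜ[k] y) = a • (br x y ⊗ₜ[k] z) +
        (b * (-1 : k) ^ (i.val * j.val)) • (y ⊗ₜ[k] x))
    (w : L) : Φ (w ⊗ₜ z) = b • (z ⊗ₜ w) := by
  have : Φ ∘ₗ (TensorProduct.mk k L L).flip z = b • TensorProduct.mk k L L z :=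
    LinearMap.ext_of_iSup_eq_top hG fun i x hx ↦ by
      simp [hΦ i 0 x hx z hz0, bracket_central_right hG hanti hz0 hzc]
  exact congr($this w)

theorem map_tmul_central' (hG : ⨆ i, G i = ⊤) (hanti : SuperAntisymm G br)
    (hz0 : z ∈ G 0) (hzc : ∀ x : L, br z x = 0)
    (hΦ : ∀ i j : ZMod 2, ∀ x ∈ G i, ∀ y ∈ G j,
      Φ (x ⊗ₜ[k] y) = a • (z ⊗ₜ[k] br x y) +
        (b * (-1 : k) ^ (i.val * j.val)) • (y ⊗ₜ[k] x))
    (w : L) : Φ (w ⊗ₜ z) = b • (z ⊗ₜ w) := by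
  have : Φ ∘ₗ (TensorProduct.mk k L L).flip z = b • TensorProduct.mk k L L z :=
    LinearMap.ext_of_iSup_eq_top hG fun i x hx ↦ by
      simp [hΦ i 0 x hx z hz0, bracket_central_right hG hanti hz0 hzc]
  exact congr($this w)

variable {α β : k} {φ ψ : L ⊗[k] L →ₗ[k] L ⊗[k] L}

theorem braid_tmul (hG : ⨆ i, G i = ⊤)
    (hgrade : ∀ i j : ZMod 2, ∀ x ∈ G i, ∀ y ∈ G j, br x y ∈ G (i + j))
    (hanti : SuperAntisymm G br) (hjacobi : SuperJacobi G br)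
    (hz0 : z ∈ G 0) (hzc : ∀ x : L, br z x = 0)
    (hφ : ∀ i j : ZMod 2, ∀ x ∈ G i, ∀ y ∈ G j,
      φ (x ⊗ₜ[k] y) = α • (br x y ⊗ₜ[k] z) +
        (β * (-1 : k) ^ (i.val * j.val)) • (y ⊗ₜ[k] x))
    {i j l : ZMod 2} {x y t : L} (hx : x ∈ G i) (hy : y ∈ G j) (ht : t ∈ G l) :
    leg12 φ (leg23 φ (leg12 φ (x ⊗ₜ (y ⊗ₜ t)))) =
      leg23 φ (leg12 φ (leg23 φ (x ⊗ₜ (y ⊗ₜ t)))) := by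
  simp only [leg12_tmul, leg23_tmul, hφ i j x hx y hy, hφ j l y hy t ht, hφ i l x hx t ht,
    hφ (i + j) l _ (hgrade i j x hx y hy) t ht, hφ j (i + l) y hy _ (hgrade i l x hx t ht),
    hφ i (j + l) x hx _ (hgrade j l y hy t ht), map_central_tmul hG hz0 hzc hφ,
    map_tmul_central hG hanti hz0 hzc hφ, map_add, map_smul, tmul_add, add_tmul, tmul_smul,
    ← smul_tmul', smul_smul, assoc_tmul]
  rw [bracket_bracket_eq_add hgrade hanti hjacobi hx hy ht]
  simp only [add_tmul, ← smul_tmul', smul_add, smul_smul,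
    neg_one_pow_val_add_mul, neg_one_pow_val_mul_add, Nat.mul_comm j.val i.val]
  match_scalars
  · ring
  · ring
  · ring
  · linear_combination (α * β ^ 2 * (-1 : k) ^ (j.val * l.val)) *
      neg_one_pow_mul_self (R := k) (i.val * j.val)
  · ring
  · ring

theorem inverse_comp_eq_id (hG : ⨆ i, G i = ⊤) (hanti : SuperAntisymm G br)
    (hz0 : z ∈ G 0) (hzc : ∀ x : L, br z x = 0) (hβ : β ≠ 0)
    (hφ : ∀ i j : ZMod 2, ∀ x ∈ G i, ∀ y ∈ G j,
      φ (x ⊗ₜ[k] y) = α • (br x y ⊗ₜ[k] z) +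
        (β * (-1 : k) ^ (i.val * j.val)) • (y ⊗ₜ[k] x))
    (hψ : ∀ i j : ZMod 2, ∀ x ∈ G i, ∀ y ∈ G j,
      ψ (x ⊗ₜ[k] y) = (α / β ^ 2) • (z ⊗ₜ[k] br x y) +
        ((1 / β) * (-1 : k) ^ (i.val * j.val)) • (y ⊗ₜ[k] x)) :
    ψ ∘ₗ φ = LinearMap.id := by
  refine TensorProduct.ext_of_iSup_eq_top hG fun i j x hx y hy ↦ ?_
  have hsq := neg_one_pow_mul_self (R := k) (i.val * j.val)
  simp only [comp_apply, id_apply, hφ i j x hx y hy, map_add, map_smul,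
    map_tmul_central' hG hanti hz0 hzc hψ, hψ j i y hy x hx, hanti j i y hy x hx,
    Nat.mul_comm j.val i.val, tmul_neg, tmul_smul, smul_neg, smul_smul, smul_add]
  match_scalars
  · field_simp
    linear_combination (-α) * hsq
  · field_simp
    linear_combination hsq

theorem comp_inverse_eq_id (hG : ⨆ i, G i = ⊤) (hanti : SuperAntisymm G br)
    (hz0 : z ∈ G 0) (hzc : ∀ x : L, br z x = 0) (hβ : β ≠ 0)
    (hφ : ∀ i j : ZMod 2, ∀ x ∈ G i, ∀ y ∈ G j,
      φ (x ⊗ₜ[k] y) = α • (br x y ⊗ₜ[k] z) +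
        (β * (-1 : k) ^ (i.val * j.val)) • (y ⊗ₜ[k] x))
    (hψ : ∀ i j : ZMod 2, ∀ x ∈ G i, ∀ y ∈ G j,
      ψ (x ⊗ₜ[k] y) = (α / β ^ 2) • (z ⊗ₜ[k] br x y) +
        ((1 / β) * (-1 : k) ^ (i.val * j.val)) • (y ⊗ₜ[k] x)) :
    φ ∘ₗ ψ = LinearMap.id := by
  refine TensorProduct.ext_of_iSup_eq_top hG fun i j x hx y hy ↦ ?_
  have hsq := neg_one_pow_mul_self (R := k) (i.val * j.val)
  simp only [comp_apply, id_apply, hψ i j x hx y hy, map_add, map_smul,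
    map_central_tmul hG hz0 hzc hφ, hφ j i y hy x hx, hanti j i y hy x hx,
    Nat.mul_comm j.val i.val, neg_tmul, ← smul_tmul', smul_neg, smul_smul, smul_add]
  match_scalars
  · field_simp
    linear_combination (-α) * hsq
  · field_simp
    linear_combination hsq

end LieSuperalgebra

theorem yb_operator_from_lie_superalgebra_two_params
    (L : Type*) [AddCommGroup L] [Module k L]
    (G : ZMod 2 → Submodule k L) (hG : DirectSum.IsInternal G)
    (br : L →ₗ[k] L →ₗ[k] L)
    (hgrade : ∀ i j : ZMod 2, ∀ x ∈ G i, ∀ y ∈ G j, br x y ∈ G (i + j))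
    (hanti : ∀ i j : ZMod 2, ∀ x ∈ G i, ∀ y ∈ G j,
      br x y = -(((-1 : k) ^ (i.val * j.val)) • br y x))
    (hjacobi : ∀ i j l : ZMod 2, ∀ x ∈ G i, ∀ y ∈ G j, ∀ t ∈ G l,
      ((-1 : k) ^ (l.val * i.val)) • br x (br y t) +
      ((-1 : k) ^ (i.val * j.val)) • br y (br t x) +
      ((-1 : k) ^ (j.val * l.val)) • br t (br x y) = 0)
    (z : L) (hz0 : z ∈ G 0) (hzc : ∀ x : L, br z x = 0)
    (α β : k) (hβ : β ≠ 0)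
    (φ ψ : L ⊗[k] L →ₗ[k] L ⊗[k] L)
    (hφ : ∀ i j : ZMod 2, ∀ x ∈ G i, ∀ y ∈ G j,
      φ (x ⊗ₜ[k] y) = α • (br x y ⊗ₜ[k] z) +
        (β * (-1 : k) ^ (i.val * j.val)) • (y ⊗ₜ[k] x))
    (hψ : ∀ i j : ZMod 2, ∀ x ∈ G i, ∀ y ∈ G j,
      ψ (x ⊗ₜ[k] y) = (α / β ^ 2) • (z ⊗ₜ[k] br x y) +
        ((1 / β) * (-1 : k) ^ (i.val * j.val)) • (y ⊗ₜ[k] x)) :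
    (leg12 φ ∘ₗ leg23 φ ∘ₗ leg12 φ = leg23 φ ∘ₗ leg12 φ ∘ₗ leg23 φ) ∧
    ψ ∘ₗ φ = LinearMap.id ∧ φ ∘ₗ ψ = LinearMap.id := by
  have hG' := hG.submodule_iSup_eq_top
  exact ⟨TensorProduct.ext_threefold_of_iSup_eq_top hG' fun _ _ _ _ hx _ hy _ ht ↦
      braid_tmul hG' hgrade hanti hjacobi hz0 hzc hφ hx hy ht,
    inverse_comp_eq_id hG' hanti hz0 hzc hβ hφ hψ,
    comp_inverse_eq_id hG' hanti hz0 hzc hβ hφ hψ⟩
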